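/- Let M be a forest (a possibly infinite acyclic simple graph), A a finite set of vertices with A ≤* M (i.e., A is closed in every finite superset of A inside M), and b̄ a finite set of vertices with A ∩ b̄ = ∅. Then A ∩ cl*_M(b̄) = ∅. -/

import Mathlib

open SimpleGraph

/-- The predimension of a finite set `A` of vertices: `|A| - e(A)`, where `e(A)` is the
number of edges of the induced subgraph on `A`. -/
noncomputable def delta {V : Type*} (G : SimpleGraph V) (A : Finset V) : ℤ :=
  (A.card : ℤ) - (Nat.card (G.induce (A : Set V)).edgeSet : ℤ)

/-- `A` is closed in `B` (`A ≤* B`): `A ⊆ B` and `δ(C) > δ(A)` for every finite `C` with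
`A ⊊ C ⊆ B`. -/
def Closed {V : Type*} (G : SimpleGraph V) (A B : Finset V) : Prop :=
  A ⊆ B ∧ ∀ C : Finset V, A ⊂ C → C ⊆ B → delta G A < delta G C

/-- `A` is weakly closed in `B` (`A ≤ B`). -/
def WClosed {V : Type*} (G : SimpleGraph V) (A B : Finset V) : Prop :=
  A ⊆ B ∧ ∀ C : Finset V, A ⊆ C → C ⊆ B → delta G A ≤ delta G C

/-- `A ≤* M` : `A` is closed in every finite superset inside the graph. -/
def ClosedIn {V : Type*} (G : SimpleGraph V) (A : Finset V) : Prop :=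
  ∀ B : Finset V, A ⊆ B → Closed G A B

def WClosedIn {V : Type*} (G : SimpleGraph V) (A : Finset V) : Prop :=
  ∀ B : Finset V, A ⊆ B → WClosed G A B

/-- `(A,B)` is a minimal pair. -/
def MinPair {V : Type*} (G : SimpleGraph V) (A B : Finset V) : Prop :=
  A ⊆ B ∧ (∀ C : Finset V, A ⊆ C → C ⊂ B → Closed G A C) ∧ ¬ Closed G A B

def WMinPair {V : Type*} (G : SimpleGraph V) (A B : Finset V) : Prop :=
  A ⊆ B ∧ (∀ C : Finset V, A ⊆ C → C ⊂ B → WClosed G A C) ∧ ¬ WClosed G A B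

/-- `B` is an intrinsic extension of `A`. -/
def IntrinsicExt {V : Type*} (G : SimpleGraph V) (A B : Finset V) : Prop :=
  A ⊆ B ∧ ∀ C : Finset V, A ⊆ C → C ⊂ B → ¬ Closed G C B

def WIntrinsicExt {V : Type*} (G : SimpleGraph V) (A B : Finset V) : Prop :=
  A ⊆ B ∧ ∀ C : Finset V, A ⊆ C → C ⊂ B → ¬ WClosed G C B

/-- The closure `cl*_M(N)`. -/
def clStar {V : Type*} (G : SimpleGraph V) (N : Set V) : Set V :=
  {b | ∃ A E : Finset V, (A : Set V) ⊆ N ∧ IntrinsicExt G A E ∧ b ∈ E}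

/-- The weak closure `cl_M(N)`. -/
def clWeak {V : Type*} (G : SimpleGraph V) (N : Set V) : Set V :=
  {b | ∃ A E : Finset V, (A : Set V) ⊆ N ∧ WIntrinsicExt G A E ∧ b ∈ E}

/-!
A forest has positive predimension on every nonempty finite set, and a set `A ≤* M` has no
edges leaving it (adding a neighbour would not raise `δ`). Hence for any finite `E`, the set
`E ∖ A` is closed in `E`: a set `D` between them splits as `(E ∖ A) ⊔ (D ∩ A)` with no edges
across, so `δ(D) = δ(E ∖ A) + δ(D ∩ A) > δ(E ∖ A)`. An intrinsic extension of a set disjoint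
from `A` therefore cannot meet `A`.
-/

namespace SimpleGraph

variable {V : Type*} {G : SimpleGraph V}

theorem IsAcyclic.card_edgeSet_lt [Finite V] [Nonempty V] (hG : G.IsAcyclic) :
    Nat.card G.edgeSet < Nat.card V := by
  obtain ⟨T, hGT, -, hT⟩ := connected_top.exists_isTree_le_of_le_of_isAcyclic le_top hG
  have hcard := (isTree_iff_connected_and_card.mp hT).2
  have hmono : Nat.card G.edgeSet ≤ Nat.card T.edgeSet :=
    Nat.card_mono (Set.toFinite _) (edgeSet_mono hGT)
  omega

open Classical in
noncomputable def inducedEdgeFinset (G : SimpleGraph V) (s : Finset V) : Finset (Sym2 V) :=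
  s.sym2.filter (· ∈ G.edgeSet)

theorem mem_inducedEdgeFinset {s : Finset V} {a b : V} :
    s(a, b) ∈ G.inducedEdgeFinset s ↔ a ∈ s ∧ b ∈ s ∧ G.Adj a b := by
  classical
  simp [inducedEdgeFinset, and_assoc]

theorem inducedEdgeFinset_mono {s t : Finset V} (h : s ⊆ t) :
    G.inducedEdgeFinset s ⊆ G.inducedEdgeFinset t := by
  classical
  exact Finset.filter_subset_filter _ (Finset.sym2_mono h)

theorem card_edgeSet_induce (G : SimpleGraph V) (s : Finset V) :
    Nat.card (G.induce (s : Set V)).edgeSet = (G.inducedEdgeFinset s).card := by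
  rw [← Nat.card_eq_finsetCard,
    ← Nat.card_image_of_injective (Sym2.map.injective Subtype.val_injective)]
  congr 2
  ext e
  induction e using Sym2.ind with
  | _ a b =>
    rw [Finset.mem_coe, mem_inducedEdgeFinset]
    simp only [Set.mem_image, mem_edgeSet, Sym2.exists, Sym2.map_mk, comap_adj,
      Function.Embedding.subtype_apply, Sym2.eq_iff, Subtype.exists, Finset.mem_coe]
    constructor
    · rintro ⟨x, hx, y, hy, hxy, ⟨rfl, rfl⟩ | ⟨rfl, rfl⟩⟩
      exacts [⟨hx, hy, hxy⟩, ⟨hy, hx, hxy.symm⟩]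
    · rintro ⟨ha, hb, hab⟩
      exact ⟨a, ha, b, hb, hab, .inl ⟨rfl, rfl⟩⟩

theorem delta_eq_card_sub_card_inducedEdgeFinset (G : SimpleGraph V) (s : Finset V) :
    delta G s = s.card - (G.inducedEdgeFinset s).card := by
  rw [delta, card_edgeSet_induce]

theorem IsAcyclic.delta_pos (hG : G.IsAcyclic) {s : Finset V} (hs : s.Nonempty) :
    0 < delta G s := by
  have : Nonempty (s : Set V) := hs.coe_sort
  have hlt := (hG.induce (s : Set V)).card_edgeSet_lt
  have hcard : Nat.card (s : Set V) = s.card := Nat.card_eq_finsetCard s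
  rw [delta]
  omega

variable [DecidableEq V]

theorem inducedEdgeFinset_union_subset {s t : Finset V}
    (hst : ∀ a ∈ s, ∀ b ∈ t, ¬G.Adj a b) :
    G.inducedEdgeFinset (s ∪ t) ⊆ G.inducedEdgeFinset s ∪ G.inducedEdgeFinset t := by
  intro e he
  induction e using Sym2.ind with
  | _ a b =>
    rw [Finset.mem_union, mem_inducedEdgeFinset, mem_inducedEdgeFinset]
    rw [mem_inducedEdgeFinset, Finset.mem_union, Finset.mem_union] at he
    obtain ⟨ha | ha, hb | hb, hab⟩ := he
    · exact .inl ⟨ha, hb, hab⟩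
    · exact absurd hab (hst a ha b hb)
    · exact absurd hab.symm (hst b hb a ha)
    · exact .inr ⟨ha, hb, hab⟩

theorem delta_add_delta_le_delta_union {s t : Finset V} (hdisj : Disjoint s t)
    (hst : ∀ a ∈ s, ∀ b ∈ t, ¬G.Adj a b) :
    delta G s + delta G t ≤ delta G (s ∪ t) := by
  have hedges := (Finset.card_le_card (inducedEdgeFinset_union_subset hst)).trans
    (Finset.card_union_le _ _)
  simp only [delta_eq_card_sub_card_inducedEdgeFinset, Finset.card_union_of_disjoint hdisj]
  omega

theorem delta_insert_le_of_adj {s : Finset V} {v w : V} (hv : v ∈ s) (hw : w ∉ s)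
    (hvw : G.Adj v w) : delta G (insert w s) ≤ delta G s := by
  have hnew : s(v, w) ∈ G.inducedEdgeFinset (insert w s) :=
    mem_inducedEdgeFinset.mpr ⟨Finset.mem_insert_of_mem hv, Finset.mem_insert_self w s, hvw⟩
  have hold : s(v, w) ∉ G.inducedEdgeFinset s := fun h => hw (mem_inducedEdgeFinset.mp h).2.1
  have hlt := Finset.card_lt_card ((Finset.ssubset_iff_of_subset
    (inducedEdgeFinset_mono (Finset.subset_insert w s))).mpr ⟨_, hnew, hold⟩)
  rw [delta_eq_card_sub_card_inducedEdgeFinset, delta_eq_card_sub_card_inducedEdgeFinset,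
    Finset.card_insert_of_notMem hw]
  omega

end SimpleGraph

section Closure

variable {V : Type*} {G : SimpleGraph V}

theorem ClosedIn.not_adj {A : Finset V} (hA : ClosedIn G A) {v w : V} (hv : v ∈ A)
    (hw : w ∉ A) : ¬G.Adj v w := by
  classical
  intro hvw
  have hlt := (hA (insert w A) (Finset.subset_insert w A)).2 _ (Finset.ssubset_insert hw) le_rfl
  exact (delta_insert_le_of_adj hv hw hvw).not_gt hlt

theorem closed_sdiff_of_forall_not_adj [DecidableEq V] (hG : G.IsAcyclic) {A : Finset V}
    (hA : ∀ v ∈ A, ∀ w ∉ A, ¬G.Adj v w) (E : Finset V) : Closed G (E \ A) E := by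
  refine ⟨Finset.sdiff_subset, fun D hD hDE => ?_⟩
  have hDA : D \ A = E \ A := (Finset.sdiff_subset_sdiff hDE le_rfl).antisymm
    (Finset.subset_sdiff.mpr ⟨hD.subset, Finset.sdiff_disjoint⟩)
  rw [← hDA] at hD ⊢
  have hne : (D ∩ A).Nonempty := by
    obtain ⟨x, hxD, hx⟩ := Finset.exists_of_ssubset hD
    exact ⟨x, Finset.mem_inter.mpr ⟨hxD, by simpa [hxD] using hx⟩⟩
  have hsuper := delta_add_delta_le_delta_union (Finset.disjoint_sdiff_inter D A)
    fun a ha b hb hab => hA b (Finset.mem_inter.mp hb).2 a (Finset.mem_sdiff.mp ha).2 hab.symm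
  rw [Finset.sdiff_union_inter] at hsuper
  linarith [hG.delta_pos hne]

theorem IntrinsicExt.disjoint_of_closedIn (hG : G.IsAcyclic) {A B E : Finset V}
    (hA : ClosedIn G A) (hBE : IntrinsicExt G B E) (hBA : Disjoint B A) : Disjoint E A := by
  classical
  rw [Finset.disjoint_left]
  intro x hxE hxA
  refine hBE.2 (E \ A) (Finset.subset_sdiff.mpr ⟨hBE.1, hBA⟩) ?_
    (closed_sdiff_of_forall_not_adj hG (fun _ hv _ hw => hA.not_adj hv hw) E)
  exact (Finset.ssubset_iff_of_subset Finset.sdiff_subset).mpr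
    ⟨x, hxE, fun h => (Finset.mem_sdiff.mp h).2 hxA⟩

end Closure

/-- Let `M` be a (possibly infinite) forest, `A` a finite set of vertices
with `A ≤* M`, and `b̄` a finite set of vertices with `A ∩ b̄ = ∅`. Then
`A ∩ cl*_M(b̄) = ∅`. -/
theorem stmt_9 {V : Type*} (G : SimpleGraph V) (hG : G.IsAcyclic) (A bbar : Finset V)
    (hA : ClosedIn G A) (hdisj : (A : Set V) ∩ (bbar : Set V) = ∅) :
    (A : Set V) ∩ clStar G (bbar : Set V) = ∅ := by
  rw [Set.eq_empty_iff_forall_notMem]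
  rintro x ⟨hxA, B, E, hB, hBE, hxE⟩
  have hBA : Disjoint B A := Finset.disjoint_left.mpr fun b hbB hbA =>
    Set.eq_empty_iff_forall_notMem.mp hdisj b ⟨hbA, hB hbB⟩
  exact Finset.disjoint_left.mp (hBE.disjoint_of_closedIn hG hA hBA) hxE hxA
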